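/- arXiv:2009.14761 — 4 statements merged into one kernel-verified Lean document; each statement's English description precedes it below -/
import Mathlib

section
/- Let n be an even positive integer, let x_1,…,x_n be real numbers with R·(n/2) − S² ≠ 0 where R = Σ_{i=1}^{n/2} x_{2i−1}² and S = Σ_{i=1}^{n/2} x_{2i−1}, let γ' > 0, and let a_i, Y_{2i−1}, d_i (i = 1,…,n/2) be arbitrary real numbers. For a function φ : ℝ → ℝ define T_φ = Σ_{i=1}^{n/2}(a_i − φ(x_{2i−1}))² + (2/γ')·Σ_{i=1}^{n/2}(Y_{2i−1} − φ(x_{2i−1}))·d_i − (2/n)·(Σ_{i=1}^{n/2}(a_i − φ(x_{2i−1})) + (1/γ')·Σ_{i=1}^{n/2} d_i)² − (n/2)·(Σ_{i=1}^{n/2}(a_i + (1/γ')·d_i − φ(x_{2i−1}))·(x_{2i−1} − S/(n/2)))² / (R·(n/2) − S²). Then for every affine function f : ℝ → ℝ one has T_f = T_0, where T_0 denotes T_φ with φ identically zero. -/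
/-!
With `b i = a i + d i / γ'`, the statistic `T_φ` splits as the residual sum of squares of the
least-squares fit of `b - φ ∘ x` by an affine function of `x`, plus a term in which `φ` does not
occur. The residuals of such a fit only see the component orthogonal to the span of the constants
and of `x`, so subtracting an affine function of `x` leaves them unchanged.
-/

open Finset

/-- The statistic `T_φ` of the paper, for arbitrary values `a_i` (the estimator values),
`Y_i` (the observations), `d_i` (the indicator values), scale `γ'` and a centering
function `φ`. -/
noncomputable def Tphi (n : ℕ) (x a Y d : ℕ → ℝ) (γ' : ℝ) (φ : ℝ → ℝ) : ℝ :=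
  (∑ i ∈ Finset.Icc 1 (n / 2), (a i - φ (x (2 * i - 1))) ^ 2)
    + 2 / γ' * ∑ i ∈ Finset.Icc 1 (n / 2), (Y (2 * i - 1) - φ (x (2 * i - 1))) * d i
    - 2 / (n : ℝ) *
        ((∑ i ∈ Finset.Icc 1 (n / 2), (a i - φ (x (2 * i - 1))))
          + 1 / γ' * ∑ i ∈ Finset.Icc 1 (n / 2), d i) ^ 2
    - ((n : ℝ) / 2) *
        (∑ i ∈ Finset.Icc 1 (n / 2),
          (a i + 1 / γ' * d i - φ (x (2 * i - 1)))
            * (x (2 * i - 1) - (∑ j ∈ Finset.Icc 1 (n / 2), x (2 * j - 1)) / ((n : ℝ) / 2))) ^ 2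
      / ((∑ j ∈ Finset.Icc 1 (n / 2), (x (2 * j - 1)) ^ 2) * ((n : ℝ) / 2)
          - (∑ j ∈ Finset.Icc 1 (n / 2), x (2 * j - 1)) ^ 2)

variable {ι : Type*}

/-- The residual sum of squares of the least-squares fit of `u` by an affine function of `X`
over `s`: `‖u‖² - ⟨u, 1⟩² / ‖1‖² - ⟨u, w⟩² / ‖w‖²` for the centred `w = X - X̄`, using
`‖w‖² = (#s * ∑ X² - (∑ X)²) / #s`. -/
noncomputable def residualSumSq (s : Finset ι) (X u : ι → ℝ) : ℝ :=
  ∑ i ∈ s, u i ^ 2 - (∑ i ∈ s, u i) ^ 2 / #s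
    - #s * (∑ i ∈ s, u i * (X i - (∑ j ∈ s, X j) / #s)) ^ 2
      / ((∑ j ∈ s, X j ^ 2) * #s - (∑ j ∈ s, X j) ^ 2)

theorem sum_affine_mul_centered (s : Finset ι) (X : ι → ℝ) (m c : ℝ) (hs : (s.card : ℝ) ≠ 0) :
    ∑ i ∈ s, (m * X i + c) * (X i - (∑ j ∈ s, X j) / s.card)
      = m * ((∑ j ∈ s, X j ^ 2) * s.card - (∑ j ∈ s, X j) ^ 2) / s.card := by
  have h : ∀ i, (m * X i + c) * (X i - (∑ j ∈ s, X j) / s.card)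
      = m * X i ^ 2 + (c - m * (∑ j ∈ s, X j) / s.card) * X i
        - c * (∑ j ∈ s, X j) / s.card := fun i => by ring
  simp only [h, sum_add_distrib, sum_sub_distrib, ← mul_sum, sum_const, nsmul_eq_mul]
  field_simp
  ring

theorem residualSumSq_sub_affine (s : Finset ι) (X u : ι → ℝ) (m c : ℝ)
    (hΔ : (∑ j ∈ s, X j ^ 2) * #s - (∑ j ∈ s, X j) ^ 2 ≠ 0) :
    residualSumSq s X (fun i => u i - (m * X i + c)) = residualSumSq s X u := by
  have hs : (s.card : ℝ) ≠ 0 := by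
    intro hs
    rw [Nat.cast_eq_zero, card_eq_zero] at hs
    simp [hs] at hΔ
  have h_cov : ∑ i ∈ s, (u i - (m * X i + c)) * (X i - (∑ j ∈ s, X j) / s.card)
      = ∑ i ∈ s, u i * (X i - (∑ j ∈ s, X j) / s.card)
        - m * ((∑ j ∈ s, X j ^ 2) * s.card - (∑ j ∈ s, X j) ^ 2) / s.card := by
    simp only [sub_mul _ (m * _ + c), sum_sub_distrib, sum_affine_mul_centered s X m c hs]
  unfold residualSumSq
  rw [h_cov]
  set k : ℝ := ((s.card : ℕ) : ℝ) with hk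
  set S := ∑ j ∈ s, X j
  set R := ∑ j ∈ s, X j ^ 2
  have h_sum : ∑ i ∈ s, (u i - (m * X i + c)) = ∑ i ∈ s, u i - m * S - c * k := by
    simp only [sum_sub_distrib, sum_add_distrib, ← mul_sum, sum_const, nsmul_eq_mul, ← hk]
    ring
  have h_sq : ∑ i ∈ s, (u i - (m * X i + c)) ^ 2
      = ∑ i ∈ s, u i ^ 2 - 2 * m * ∑ i ∈ s, u i * X i - 2 * c * ∑ i ∈ s, u i
        + m ^ 2 * R + 2 * m * c * S + c ^ 2 * k := by
    have h : ∀ i, (u i - (m * X i + c)) ^ 2 = u i ^ 2 - 2 * m * (u i * X i) - 2 * c * u i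
        + m ^ 2 * X i ^ 2 + 2 * m * c * X i + c ^ 2 := fun i => by ring
    simp only [h, sum_add_distrib, sum_sub_distrib, ← mul_sum, sum_const, nsmul_eq_mul, ← hk]
    ring
  have h_uX : ∑ i ∈ s, u i * X i = ∑ i ∈ s, u i * (X i - S / k) + S / k * ∑ i ∈ s, u i := by
    rw [mul_sum, ← sum_add_distrib]
    exact sum_congr rfl fun i _ => by ring
  rw [h_sum, h_sq, h_uX]
  generalize ∑ i ∈ s, u i * (X i - S / k) = t
  have hΔ' : k * R - S ^ 2 ≠ 0 := by rwa [mul_comm]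
  field_simp
  ring

theorem cast_card_Icc_one_div_two {n : ℕ} (hn : Even n) :
    ((#(Icc 1 (n / 2)) : ℕ) : ℝ) = n / 2 := by
  rw [Nat.card_Icc, Nat.add_sub_cancel, Nat.cast_div (even_iff_two_dvd.mp hn) two_ne_zero]
  norm_num

theorem Tphi_eq_residualSumSq_add {n : ℕ} (hn : Even n) (x a Y d : ℕ → ℝ) (γ' : ℝ)
    (φ : ℝ → ℝ) :
    Tphi n x a Y d γ' φ =
      residualSumSq (Icc 1 (n / 2)) (fun i => x (2 * i - 1))
          (fun i => a i + 1 / γ' * d i - φ (x (2 * i - 1)))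
        + (2 / γ' * ∑ i ∈ Icc 1 (n / 2), (Y (2 * i - 1) - a i) * d i
          - (1 / γ') ^ 2 * ∑ i ∈ Icc 1 (n / 2), d i ^ 2) := by
  have h_sum : ∑ i ∈ Icc 1 (n / 2), (a i - φ (x (2 * i - 1))) + 1 / γ' * ∑ i ∈ Icc 1 (n / 2), d i
      = ∑ i ∈ Icc 1 (n / 2), (a i + 1 / γ' * d i - φ (x (2 * i - 1))) := by
    rw [mul_sum, ← sum_add_distrib]
    exact sum_congr rfl fun i _ => by ring
  have h_sq : ∑ i ∈ Icc 1 (n / 2), (a i - φ (x (2 * i - 1))) ^ 2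
        + 2 / γ' * ∑ i ∈ Icc 1 (n / 2), (Y (2 * i - 1) - φ (x (2 * i - 1))) * d i
      = ∑ i ∈ Icc 1 (n / 2), (a i + 1 / γ' * d i - φ (x (2 * i - 1))) ^ 2
        + (2 / γ' * ∑ i ∈ Icc 1 (n / 2), (Y (2 * i - 1) - a i) * d i
          - (1 / γ') ^ 2 * ∑ i ∈ Icc 1 (n / 2), d i ^ 2) := by
    simp only [mul_sum, ← sum_add_distrib, ← sum_sub_distrib]
    exact sum_congr rfl fun i _ => by ring
  unfold Tphi residualSumSq
  rw [cast_card_Icc_one_div_two hn, h_sum, h_sq]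
  ring

theorem stmt2_general (n : ℕ) (heven : Even n)
    (x a Y d : ℕ → ℝ)
    (hΔ : (∑ j ∈ Finset.Icc 1 (n / 2), (x (2 * j - 1)) ^ 2) * ((n : ℝ) / 2)
        - (∑ j ∈ Finset.Icc 1 (n / 2), x (2 * j - 1)) ^ 2 ≠ 0)
    (γ' : ℝ)
    (f : ℝ → ℝ) (hf : ∃ m c : ℝ, ∀ t : ℝ, f t = m * t + c) :
    Tphi n x a Y d γ' f = Tphi n x a Y d γ' (fun _ => 0) := by
  obtain ⟨m, c, hmc⟩ := hf
  rw [← cast_card_Icc_one_div_two heven] at hΔ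
  rw [Tphi_eq_residualSumSq_add heven, Tphi_eq_residualSumSq_add heven]
  simp only [hmc, sub_zero]
  rw [residualSumSq_sub_affine _ _ _ _ _ hΔ]

/-- The bias-corrected statistic is unchanged by centering at any affine
function: `T_f = T_0` for every affine `f`. -/
theorem stmt2 (n : ℕ) (hn : 0 < n) (heven : Even n)
    (x a Y d : ℕ → ℝ)
    (hΔ : (∑ j ∈ Finset.Icc 1 (n / 2), (x (2 * j - 1)) ^ 2) * ((n : ℝ) / 2)
        - (∑ j ∈ Finset.Icc 1 (n / 2), x (2 * j - 1)) ^ 2 ≠ 0)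
    (γ' : ℝ) (hγ' : 0 < γ')
    (f : ℝ → ℝ) (hf : ∃ m c : ℝ, ∀ t : ℝ, f t = m * t + c) :
    Tphi n x a Y d γ' f = Tphi n x a Y d γ' (fun _ => 0) :=
  stmt2_general n heven x a Y d hΔ γ' f hf
end

section
/- Let 0 ≤ a < b ≤ 1, let h > 0, let g : ℝ → ℝ be an affine function, and suppose the data satisfy Y_{2i} = g(x_{2i}) + ε_{2i} with ε_{2i} ≤ 0, where for every j ∈ {0, 1, …, 2⌈(b−a)/h⌉ + 1} the interval (a + (j−1)·h/2, a + j·h/2] contains at least one even-indexed design point x_{2i}. Define Z_j(h) := max{ ε_{2i} : x_{2i} ∈ (a + (j−1)·h/2, a + j·h/2] }. Then for every x ∈ (a, b]: |ĝ(x) − g(x)| ≤ max{ |Z_j(h)| : j = 0, …, 2⌈(b−a)/h⌉ + 1 }, where ĝ is the boundary estimator with bandwidth h. -/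
/-!
If `g(s) = m s + c` and all errors are nonpositive, the line `p₀ + p₁ (s − t)` with `p₀ = g(t)`,
`p₁ = m` lies above every observation, so `ĝ(t) ≤ g(t)`. Conversely, the half-bandwidth windows
place `t` in some window `j + 1`, and the neighbouring windows `j` and `j + 2` contain design points
`u < t < v` within distance `h` of `t` whose errors are the block maxima `Z_j`, `Z_{j+2}`, hence
at least `−M` with `M = maxⱼ |Z_j|`. Any feasible line lies above both observations; the convex
combination of the two constraints that places the abscissa at `t` eliminates the slope and gives
`p₀ ≥ g(t) − M`.
-/

/-- The boundary estimator `ĝ` with bandwidth `hh`, computed from the even-indexed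
observations `Y_{2i}`, `i = 1,…,N/2`:
`ĝ(t) = min{p₀ | ∃ p₁, Y_{2i} ≤ p₀ + p₁·(x_{2i} − t) for all i with |t − x_{2i}| < hh}`. -/
noncomputable def gHat (N : ℕ) (hh : ℝ) (x Y : ℕ → ℝ) (t : ℝ) : ℝ :=
  sInf {p₀ : ℝ | ∃ p₁ : ℝ, ∀ i ∈ Finset.Icc 1 (N / 2),
    |t - x (2 * i)| < hh → Y (2 * i) ≤ p₀ + p₁ * (x (2 * i) - t)}

open Finset

def feasibleIntercepts (N : ℕ) (h : ℝ) (x Y : ℕ → ℝ) (t : ℝ) : Set ℝ :=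
  {p₀ : ℝ | ∃ p₁ : ℝ, ∀ i ∈ Icc 1 (N / 2),
    |t - x (2 * i)| < h → Y (2 * i) ≤ p₀ + p₁ * (x (2 * i) - t)}

theorem gHat_eq_sInf_feasibleIntercepts (N : ℕ) (h : ℝ) (x Y : ℕ → ℝ) (t : ℝ) :
    gHat N h x Y t = sInf (feasibleIntercepts N h x Y t) :=
  rfl

theorem affine_le_of_bracket {u t v m c M p₀ p₁ eu ev : ℝ} (hut : u < t) (htv : t < v)
    (heu : -M ≤ eu) (hev : -M ≤ ev)
    (hu : m * u + c + eu ≤ p₀ + p₁ * (u - t)) (hv : m * v + c + ev ≤ p₀ + p₁ * (v - t)) :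
    m * t + c - M ≤ p₀ := by
  -- the weights `v - t` and `t - u` cancel the slope `p₁`
  have hweighted : (v - u) * (m * t + c - M) ≤ (v - u) * p₀ := by
    linarith [mul_le_mul_of_nonneg_left hu (sub_nonneg.2 htv.le),
      mul_le_mul_of_nonneg_left hv (sub_nonneg.2 hut.le),
      mul_le_mul_of_nonneg_left heu (sub_nonneg.2 htv.le),
      mul_le_mul_of_nonneg_left hev (sub_nonneg.2 hut.le)]
  exact le_of_mul_le_mul_left hweighted (sub_pos.2 (hut.trans htv))

section Estimator

variable {N : ℕ} {h m c M t : ℝ} {g : ℝ → ℝ} {x Y ε : ℕ → ℝ}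

theorem affine_mem_feasibleIntercepts (hg : ∀ s, g s = m * s + c)
    (hY : ∀ i ∈ Icc 1 (N / 2), Y (2 * i) ≤ g (x (2 * i))) :
    g t ∈ feasibleIntercepts N h x Y t := by
  refine ⟨m, fun i hi _ => ?_⟩
  have := hY i hi
  rw [hg] at this ⊢
  linarith

theorem abs_gHat_sub_le_of_bracket (hg : ∀ s, g s = m * s + c)
    (hmodel : ∀ i ∈ Icc 1 (N / 2), Y (2 * i) = g (x (2 * i)) + ε (2 * i))
    (hεneg : ∀ i ∈ Icc 1 (N / 2), ε (2 * i) ≤ 0)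
    {iu iv : ℕ} (hiu : iu ∈ Icc 1 (N / 2)) (hiv : iv ∈ Icc 1 (N / 2))
    (hut : x (2 * iu) < t) (htv : t < x (2 * iv))
    (hu : |t - x (2 * iu)| < h) (hv : |t - x (2 * iv)| < h)
    (hεu : -M ≤ ε (2 * iu)) (hεv : -M ≤ ε (2 * iv)) :
    |gHat N h x Y t - g t| ≤ M := by
  have hfeas : g t ∈ feasibleIntercepts N h x Y t :=
    affine_mem_feasibleIntercepts hg fun i hi => by linarith [hmodel i hi, hεneg i hi]
  have hlower : ∀ p₀ ∈ feasibleIntercepts N h x Y t, g t - M ≤ p₀ := by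
    rintro p₀ ⟨p₁, hp⟩
    have hYu := hp iu hiu hu
    have hYv := hp iv hiv hv
    rw [hmodel iu hiu, hg] at hYu
    rw [hmodel iv hiv, hg] at hYv
    rw [hg]
    exact affine_le_of_bracket hut htv hεu hεv hYu hYv
  have hM : 0 ≤ M := by linarith [hεneg iu hiu]
  rw [gHat_eq_sInf_feasibleIntercepts, abs_sub_le_iff]
  constructor
  · linarith [csInf_le ⟨_, hlower⟩ hfeas]
  · linarith [le_csInf ⟨_, hfeas⟩ hlower]

end Estimator

theorem exists_mem_eq_csSup_of_finset {ι : Type*} {s : Finset ι} {p : ι → Prop} (f : ι → ℝ)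
    (hne : ∃ i ∈ s, p i) : ∃ i ∈ s, p i ∧ f i = sSup {v | ∃ i ∈ s, p i ∧ v = f i} := by
  obtain ⟨i₀, hi₀, hp₀⟩ := hne
  have hfin : {v | ∃ i ∈ s, p i ∧ v = f i}.Finite :=
    (s.finite_toSet.image f).subset (by rintro _ ⟨i, hi, -, rfl⟩; exact ⟨i, hi, rfl⟩)
  have hne' : {v | ∃ i ∈ s, p i ∧ v = f i}.Nonempty := ⟨f i₀, i₀, hi₀, hp₀, rfl⟩
  obtain ⟨i, hi, hpi, hv⟩ := hne'.csSup_mem hfin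
  exact ⟨i, hi, hpi, hv.symm⟩

def window (a h : ℝ) (j : ℕ) : Set ℝ :=
  Set.Ioc (a + ((j : ℝ) - 1) * h / 2) (a + (j : ℝ) * h / 2)

section Window

variable {a h t : ℝ} {j : ℕ}

theorem exists_succ_mem_window (hh : 0 < h) (hat : a < t) : ∃ j : ℕ, t ∈ window a h (j + 1) := by
  have hpos : 0 < 2 * (t - a) / h := div_pos (by linarith) hh
  obtain ⟨j, hj⟩ := Nat.exists_eq_add_one_of_ne_zero (Nat.ceil_pos.2 hpos).ne'
  have hlt : (j : ℝ) < 2 * (t - a) / h := Nat.lt_ceil.1 (by omega)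
  have hle : 2 * (t - a) / h ≤ (j + 1 : ℕ) := by rw [← hj]; exact Nat.le_ceil _
  rw [lt_div_iff₀ hh] at hlt
  rw [div_le_iff₀ hh] at hle
  refine ⟨j, ?_, ?_⟩ <;> push_cast at hle ⊢ <;> linarith

theorem add_two_le_of_succ_mem_window {b : ℝ} (hh : 0 < h) (ht : t ∈ window a h (j + 1))
    (htb : t ≤ b) : j + 2 ≤ 2 * ⌈(b - a) / h⌉₊ + 1 := by
  have hj : (j : ℝ) < 2 * ⌈(b - a) / h⌉₊ := by
    have hceil := (div_le_iff₀ hh).1 (Nat.le_ceil ((b - a) / h))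
    have := ht.1
    push_cast at this
    nlinarith
  have : j < 2 * ⌈(b - a) / h⌉₊ := by exact_mod_cast hj
  omega

theorem bracket_of_mem_window {u v : ℝ} (hu : u ∈ window a h j) (ht : t ∈ window a h (j + 1))
    (hv : v ∈ window a h (j + 2)) : u < t ∧ t < v ∧ |t - u| < h ∧ |t - v| < h := by
  obtain ⟨hu₁, hu₂⟩ := hu
  obtain ⟨ht₁, ht₂⟩ := ht
  obtain ⟨hv₁, hv₂⟩ := hv
  push_cast at ht₁ ht₂ hv₁ hv₂
  refine ⟨by linarith, by linarith, abs_lt.2 ⟨by linarith, by linarith⟩,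
    abs_lt.2 ⟨by linarith, by linarith⟩⟩

end Window

theorem stmt15_general (a b : ℝ)
    (h : ℝ) (hh : 0 < h)
    (g : ℝ → ℝ) (hg : ∃ m c : ℝ, ∀ t : ℝ, g t = m * t + c)
    (N : ℕ) (x Y ε : ℕ → ℝ)
    (hmodel : ∀ i ∈ Finset.Icc 1 (N / 2), Y (2 * i) = g (x (2 * i)) + ε (2 * i))
    (hεneg : ∀ i ∈ Finset.Icc 1 (N / 2), ε (2 * i) ≤ 0)
    (J : ℕ) (hJ : J = 2 * ⌈(b - a) / h⌉₊ + 1)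
    (hwin : ∀ j : ℕ, j ≤ J → ∃ i ∈ Finset.Icc 1 (N / 2),
      x (2 * i) ∈ Set.Ioc (a + ((j : ℝ) - 1) * h / 2) (a + (j : ℝ) * h / 2))
    (Z : ℕ → ℝ)
    (hZ : ∀ j : ℕ, Z j = sSup {v : ℝ | ∃ i ∈ Finset.Icc 1 (N / 2),
      x (2 * i) ∈ Set.Ioc (a + ((j : ℝ) - 1) * h / 2) (a + (j : ℝ) * h / 2) ∧ v = ε (2 * i)}) :
    ∀ t ∈ Set.Ioc a b,
      |gHat N h x Y t - g t| ≤
        (Finset.range (J + 1)).sup' ⟨0, Finset.mem_range.mpr (Nat.succ_pos J)⟩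
          (fun j => |Z j|) := by
  obtain ⟨m, c, hg⟩ := hg
  rintro t ⟨hat, htb⟩
  set M := (Finset.range (J + 1)).sup' ⟨0, Finset.mem_range.mpr (Nat.succ_pos J)⟩
    (fun j => |Z j|)
  have hmax : ∀ j ≤ J, ∃ i ∈ Icc 1 (N / 2), x (2 * i) ∈ window a h j ∧ -M ≤ ε (2 * i) := by
    intro j hj
    obtain ⟨i, hi, hxi, hεi⟩ := exists_mem_eq_csSup_of_finset (fun i => ε (2 * i)) (hwin j hj)
    have hZM : |Z j| ≤ M := le_sup' (fun j => |Z j|) (mem_range.2 (Nat.lt_succ_of_le hj))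
    refine ⟨i, hi, hxi, ?_⟩
    rw [hεi, ← hZ j]
    linarith [neg_abs_le (Z j)]
  obtain ⟨j, htj⟩ := exists_succ_mem_window hh hat
  have hjJ : j + 2 ≤ J := hJ ▸ add_two_le_of_succ_mem_window hh htj htb
  obtain ⟨iu, hiu, hu, hεu⟩ := hmax j (by omega)
  obtain ⟨iv, hiv, hv, hεv⟩ := hmax (j + 2) hjJ
  obtain ⟨hut, htv, hdu, hdv⟩ := bracket_of_mem_window hu htj hv
  exact abs_gHat_sub_le_of_bracket hg hmodel hεneg hiu hiv hut htv hdu hdv hεu hεv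

/-- Deterministic uniform bound on the estimation error of the boundary
estimator over `(a,b]` for an affine regression function: `|ĝ(x) − g(x)|` is bounded by the
largest of the blockwise error maxima `|Z_j(h)|`, `j = 0,…,2⌈(b−a)/h⌉+1`. -/
theorem stmt15 (a b : ℝ) (hab : 0 ≤ a ∧ a < b ∧ b ≤ 1)
    (h : ℝ) (hh : 0 < h)
    (g : ℝ → ℝ) (hg : ∃ m c : ℝ, ∀ t : ℝ, g t = m * t + c)
    (N : ℕ) (x Y ε : ℕ → ℝ)
    (hmodel : ∀ i ∈ Finset.Icc 1 (N / 2), Y (2 * i) = g (x (2 * i)) + ε (2 * i))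
    (hεneg : ∀ i ∈ Finset.Icc 1 (N / 2), ε (2 * i) ≤ 0)
    (J : ℕ) (hJ : J = 2 * ⌈(b - a) / h⌉₊ + 1)
    (hwin : ∀ j : ℕ, j ≤ J → ∃ i ∈ Finset.Icc 1 (N / 2),
      x (2 * i) ∈ Set.Ioc (a + ((j : ℝ) - 1) * h / 2) (a + (j : ℝ) * h / 2))
    (Z : ℕ → ℝ)
    (hZ : ∀ j : ℕ, Z j = sSup {v : ℝ | ∃ i ∈ Finset.Icc 1 (N / 2),
      x (2 * i) ∈ Set.Ioc (a + ((j : ℝ) - 1) * h / 2) (a + (j : ℝ) * h / 2) ∧ v = ε (2 * i)}) :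
    ∀ t ∈ Set.Ioc a b,
      |gHat N h x Y t - g t| ≤
        (Finset.range (J + 1)).sup' ⟨0, Finset.mem_range.mpr (Nat.succ_pos J)⟩
          (fun j => |Z j|) :=
  stmt15_general a b h hh g hg N x Y ε hmodel hεneg J hJ hwin Z hZ
end

section
/- Let m be a positive integer, p ∈ (0,1), and let X be a binomially distributed random variable with parameters m and p. Let k ∈ {0, 1, …, m} with k ≥ 4·m·p. Then P(X ≥ k) ≤ 2·P(X = k); equivalently, Σ_{l=k}^{m} C(m,l)·p^l·(1−p)^{m−l} ≤ 2·C(m,k)·p^k·(1−p)^{m−k}, where C(m,l) denotes the binomial coefficient. -/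
/-!
The ratio of consecutive binomial probabilities is
`P(X = l + 1) / P(X = l) = (m - l) p / ((l + 1) (1 - p))`, and for `l ≥ 4 m p` this is at most `1 / 2`.
Hence the upper tail from `k` on is dominated by the geometric series `P(X = k) · ∑ 2⁻ʲ ≤ 2 P(X = k)`.
-/

open Finset

section GeometricTail

variable {K : Type*} [Field K] [LinearOrder K] [IsStrictOrderedRing K]

theorem le_mul_pow_of_succ_le_mul {f : ℕ → K} {r : K} {k m : ℕ} (hr : 0 ≤ r)
    (hstep : ∀ l, k ≤ l → l < m → f (l + 1) ≤ r * f l) :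
    ∀ l, k ≤ l → l ≤ m → f l ≤ f k * r ^ (l - k) := by
  intro l hkl
  induction l, hkl using Nat.le_induction with
  | base => simp
  | succ n hkn ih =>
    intro hnm
    calc f (n + 1) ≤ r * f n := hstep n hkn hnm
      _ ≤ r * (f k * r ^ (n - k)) := mul_le_mul_of_nonneg_left (ih (Nat.le_of_succ_le hnm)) hr
      _ = f k * r ^ (n + 1 - k) := by rw [Nat.sub_add_comm hkn, pow_succ]; ring

theorem sum_Icc_le_div_of_succ_le_mul {f : ℕ → K} {r : K} {k m : ℕ} (hr0 : 0 ≤ r) (hr1 : r < 1)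
    (hfk : 0 ≤ f k) (hstep : ∀ l, k ≤ l → l < m → f (l + 1) ≤ r * f l) :
    ∑ l ∈ Icc k m, f l ≤ f k / (1 - r) := by
  have hgeom : ∑ j ∈ range (m + 1 - k), r ^ j ≤ 1 / (1 - r) := by
    have := geom_sum_Ico_le_of_lt_one (m := 0) (n := m + 1 - k) hr0 hr1
    rwa [← range_eq_Ico, pow_zero] at this
  calc ∑ l ∈ Icc k m, f l ≤ ∑ l ∈ Icc k m, f k * r ^ (l - k) :=
        sum_le_sum fun l hl => le_mul_pow_of_succ_le_mul hr0 hstep l (mem_Icc.1 hl).1 (mem_Icc.1 hl).2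
    _ = f k * ∑ j ∈ range (m + 1 - k), r ^ j := by
        rw [← mul_sum, ← Ico_add_one_right_eq_Icc, sum_Ico_eq_sum_range]
        refine congrArg _ (sum_congr rfl fun j _ => ?_)
        rw [Nat.add_sub_cancel_left]
    _ ≤ f k * (1 / (1 - r)) := mul_le_mul_of_nonneg_left hgeom hfk
    _ = f k / (1 - r) := mul_one_div _ _

end GeometricTail

section BinomialTerm

def binomialTerm (m : ℕ) (p : ℝ) (l : ℕ) : ℝ := m.choose l * p ^ l * (1 - p) ^ (m - l)

theorem binomialTerm_nonneg (m : ℕ) {p : ℝ} (hp0 : 0 ≤ p) (hp1 : p ≤ 1) (l : ℕ) :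
    0 ≤ binomialTerm m p l := by
  unfold binomialTerm
  have : 0 ≤ 1 - p := sub_nonneg.2 hp1
  positivity

theorem binomialTerm_succ_mul {m l : ℕ} (hlm : l < m) (p : ℝ) :
    binomialTerm m p (l + 1) * ((l + 1) * (1 - p)) = binomialTerm m p l * ((m - l) * p) := by
  have hchoose : (m.choose (l + 1) : ℝ) * (l + 1) = m.choose l * (m - l) := by
    rw [← Nat.cast_sub hlm.le]
    exact_mod_cast Nat.choose_succ_right_eq m l
  have hexp : m - l = m - (l + 1) + 1 := by omega
  unfold binomialTerm
  rw [hexp, pow_succ, pow_succ]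
  linear_combination p ^ l * p * (1 - p) ^ (m - (l + 1)) * (1 - p) * hchoose

theorem binomialTerm_succ_le_mul {m l : ℕ} (hlm : l < m) {p r : ℝ} (hp0 : 0 ≤ p) (hp1 : p < 1)
    (hratio : (m - l) * p ≤ r * ((l + 1) * (1 - p))) :
    binomialTerm m p (l + 1) ≤ r * binomialTerm m p l := by
  have hden : 0 < (l + 1) * (1 - p) := by
    have : 0 < 1 - p := sub_pos.2 hp1
    positivity
  refine le_of_mul_le_mul_right ?_ hden
  calc binomialTerm m p (l + 1) * ((l + 1) * (1 - p))
      = binomialTerm m p l * ((m - l) * p) := binomialTerm_succ_mul hlm p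
    _ ≤ binomialTerm m p l * (r * ((l + 1) * (1 - p))) :=
        mul_le_mul_of_nonneg_left hratio (binomialTerm_nonneg m hp0 hp1.le l)
    _ = r * binomialTerm m p l * ((l + 1) * (1 - p)) := by ring

end BinomialTerm

theorem stmt16_general (m : ℕ) (p : ℝ) (hp : p ∈ Set.Ioo (0 : ℝ) 1)
    (k : ℕ) (h4 : 4 * (m : ℝ) * p ≤ (k : ℝ)) :
    ∑ l ∈ Finset.Icc k m, (m.choose l : ℝ) * p ^ l * (1 - p) ^ (m - l)
      ≤ 2 * (m.choose k : ℝ) * p ^ k * (1 - p) ^ (m - k) := by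
  obtain ⟨hp0, hp1⟩ := hp
  have hstep : ∀ l, k ≤ l → l < m → binomialTerm m p (l + 1) ≤ 1 / 2 * binomialTerm m p l := by
    intro l hkl hlm
    have hkl' : (k : ℝ) ≤ l := by exact_mod_cast hkl
    refine binomialTerm_succ_le_mul hlm hp0.le hp1 ?_
    -- `(m - l) p ≤ l / 4 - l p ≤ l (1 - p) / 2`
    nlinarith [mul_nonneg (Nat.cast_nonneg l : (0 : ℝ) ≤ l) hp0.le]
  have htail := sum_Icc_le_div_of_succ_le_mul (by norm_num) (by norm_num)
    (binomialTerm_nonneg m hp0.le hp1.le k) hstep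
  unfold binomialTerm at htail
  norm_num at htail
  linarith

/-- For a binomial distribution with parameters `m`, `p` and any
`k ∈ {0,…,m}` with `k ≥ 4·m·p` one has `P(X ≥ k) ≤ 2·P(X = k)`. -/
theorem stmt16 (m : ℕ) (p : ℝ) (hp : p ∈ Set.Ioo (0 : ℝ) 1)
    (k : ℕ) (hk : k ≤ m) (h4 : 4 * (m : ℝ) * p ≤ (k : ℝ)) :
    ∑ l ∈ Finset.Icc k m, (m.choose l : ℝ) * p ^ l * (1 - p) ^ (m - l)
      ≤ 2 * (m.choose k : ℝ) * p ^ k * (1 - p) ^ (m - k) :=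
  stmt16_general m p hp k h4
end

section
/- Let n and k be integers with 2 ≤ k ≤ n−1, and let f_{k:n}(x) := (n!/((k−1)!·(n−k)!))·x^{k−1}·(1−x)^{n−k} for x ∈ [0,1] (the density of the k-th order statistic of n i.i.d. uniform[0,1] random variables). Set m := (k−1)/(n−1) and A := (n−1)²/(6(k−1)) + (n−1)²/(6(n−k)). Then: (i) for every x ∈ [0,1] with |x − m| ≤ (1 − 2^{−1/3})·min{(k−1)/(n−1), (n−k)/(n−1)}, one has f_{k:n}(x) ≤ (20/π)·n·√(n/((k−1)(n−k)))·exp(−A·(x−m)²); (ii) for every c with 0 ≤ c ≤ (1 − 2^{−1/3})·min{(k−1)/(n−1), (n−k)/(n−1)} and every x ∈ [0,1] with |x − m| ≥ c, one has f_{k:n}(x) ≤ (20/π)·n·√(n/((k−1)(n−k)))·exp(−A·c²). -/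
/-!
Write `P = k - 1`, `Q = n - k`, so that `f_{k:n}(x) = (P + Q + 1) C(P + Q, P) x^P (1 - x)^Q` with
mode `m = P / (P + Q)`. Substituting `x = m (1 + s / P)`, `1 - x = (1 - m) (1 - s / Q)` and using
`log (1 + u) ≤ u - u² / 2 + u³ / 3` gives `x^P (1 - x)^Q ≤ m^P (1 - m)^Q exp (-A (x - m)²)` whenever
`|s| ≤ min P Q`: there the cubic terms eat at most a third of the quadratic ones. Stirling's bounds
`√(2πn) (n/e)^n ≤ n! ≤ e √n (n/e)^n` give `C(P + Q, P) m^P (1 - m)^Q ≤ e / (2π) √((P + Q) / (PQ))`,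
well within the constant `20 / π`. The tail bound (ii) follows from (i) at `m ± c`, since
`x^P (1 - x)^Q` increases up to `m` and decreases after it.
-/

/-- The density of the `k`-th ascending order statistic of `n` i.i.d. uniform `[0,1]`
random variables (a Beta(k, n−k+1) density). -/
noncomputable def orderStatDensity (n k : ℕ) (x : ℝ) : ℝ :=
  (n.factorial : ℝ) / ((k - 1).factorial * (n - k).factorial)
    * x ^ (k - 1) * (1 - x) ^ (n - k)

open Real Set

theorem Real.log_one_add_le_cubic {u : ℝ} (hu : -1 < u) :
    log (1 + u) ≤ u - u ^ 2 / 2 + u ^ 3 / 3 := by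
  set g : ℝ → ℝ := fun w ↦ w - w ^ 2 / 2 + w ^ 3 / 3 - log (1 + w)
  have hg : ∀ w, -1 < w → HasDerivAt g (w ^ 3 / (1 + w)) w := by
    intro w hw
    have hlog : HasDerivAt (fun w : ℝ ↦ log (1 + w)) (1 / (1 + w)) w := by
      simpa using ((hasDerivAt_id w).const_add 1).log (by rw [id]; linarith)
    refine ((((hasDerivAt_id w).sub ((hasDerivAt_pow 2 w).div_const 2)).add
      ((hasDerivAt_pow 3 w).div_const 3)).sub hlog).congr_deriv ?_
    have : 1 + w ≠ 0 := by linarith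
    field_simp
    ring
  have hgD : ∀ D ⊆ Ioi (-1), ∀ w ∈ D, HasDerivWithinAt g (w ^ 3 / (1 + w)) D w :=
    fun D hD w hw ↦ (hg w (hD hw)).hasDerivWithinAt
  have hgC : ∀ D ⊆ Ioi (-1), ContinuousOn g D :=
    fun D hD w hw ↦ (hg w (hD hw)).continuousAt.continuousWithinAt
  suffices g 0 ≤ g u by simp only [g] at this; norm_num at this; linarith
  rcases le_total 0 u with h | h
  · have hD : Icc 0 u ⊆ Ioi (-1) := fun w hw ↦ mem_Ioi.2 (by linarith [hw.1])
    refine monotoneOn_of_hasDerivWithinAt_nonneg (convex_Icc 0 u) (hgC _ hD)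
      (fun w hw ↦ hgD _ (interior_subset.trans hD) w hw) (fun w hw ↦ ?_)
      (left_mem_Icc.2 h) (right_mem_Icc.2 h) h
    rw [interior_Icc] at hw
    exact div_nonneg (pow_nonneg hw.1.le 3) (by linarith [hw.1])
  · have hD : Icc u 0 ⊆ Ioi (-1) := fun w hw ↦ mem_Ioi.2 (by linarith [hw.1])
    refine antitoneOn_of_hasDerivWithinAt_nonpos (convex_Icc u 0) (hgC _ hD)
      (fun w hw ↦ hgD _ (interior_subset.trans hD) w hw) (fun w hw ↦ ?_)
      (left_mem_Icc.2 h) (right_mem_Icc.2 h) h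
    rw [interior_Icc] at hw
    exact div_nonpos_of_nonpos_of_nonneg (Odd.pow_nonpos (by decide) hw.2.le)
      (by linarith [hw.1])

theorem mul_sub_le_mul_of_abs_le_min {p q s : ℝ} (hs : |s| ≤ min p q) : s * (q - p) ≤ p * q := by
  have ⟨hsp, hsp'⟩ := abs_le.mp (hs.trans (min_le_left p q))
  have ⟨hsq, hsq'⟩ := abs_le.mp (hs.trans (min_le_right p q))
  rcases le_total p q with h | h <;> nlinarith

theorem mul_log_one_add_add_mul_log_one_sub_le {p q s : ℝ} (hp : 0 < p) (hq : 0 < q)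
    (hsp : -p < s) (hsq : s < q) (hs : |s| ≤ min p q) :
    p * log (1 + s / p) + q * log (1 - s / q) ≤ -(s ^ 2 / (6 * p) + s ^ 2 / (6 * q)) := by
  have hlog_p := log_one_add_le_cubic (u := s / p) (by rw [lt_div_iff₀ hp]; linarith)
  have hlog_q := log_one_add_le_cubic (u := -(s / q))
    (by rw [neg_lt_neg_iff, div_lt_one hq]; linarith)
  rw [← sub_eq_add_neg] at hlog_q
  -- the cubic terms cost at most a third of the quadratic ones because `s (q - p) ≤ p q`
  have hcubic : p * (s / p - (s / p) ^ 2 / 2 + (s / p) ^ 3 / 3)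
      + q * (-(s / q) - (-(s / q)) ^ 2 / 2 + (-(s / q)) ^ 3 / 3)
      = -(s ^ 2 / (6 * p) + s ^ 2 / (6 * q))
        - s ^ 2 * (p + q) / (3 * p ^ 2 * q ^ 2) * (p * q - s * (q - p)) := by
    field_simp
    ring
  have := mul_nonneg (by positivity : 0 ≤ s ^ 2 * (p + q) / (3 * p ^ 2 * q ^ 2))
    (sub_nonneg.2 (mul_sub_le_mul_of_abs_le_min hs))
  nlinarith [mul_le_mul_of_nonneg_left hlog_p hp.le, mul_le_mul_of_nonneg_left hlog_q hq.le]

open Nat in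
theorem factorial_le_exp_one_mul_sqrt_mul_pow {n : ℕ} (hn : n ≠ 0) :
    (n ! : ℝ) ≤ exp 1 * √n * (n / exp 1) ^ n := by
  obtain ⟨n, rfl⟩ := exists_eq_add_one_of_ne_zero hn
  have h : Stirling.stirlingSeq (n + 1) ≤ exp 1 / √2 := by
    simpa [Stirling.stirlingSeq_one] using Stirling.stirlingSeq'_antitone (Nat.zero_le n)
  rw [Stirling.stirlingSeq, div_le_iff₀ (by positivity)] at h
  calc ((n + 1)! : ℝ) ≤ exp 1 / √2 * (√(2 * (n + 1 : ℕ)) * ((n + 1 : ℕ) / exp 1) ^ (n + 1)) := h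
    _ = exp 1 * √(n + 1 : ℕ) * ((n + 1 : ℕ) / exp 1) ^ (n + 1) := by
      rw [Real.sqrt_mul zero_le_two]
      field_simp

open Nat in
theorem choose_mul_pow_mul_pow_le (P Q : ℕ) (hP : 0 < P) (hQ : 0 < Q) :
    ((P + Q).choose P : ℝ) * ((P / (P + Q)) ^ P * (Q / (P + Q)) ^ Q)
      ≤ exp 1 / (2 * π) * √((P + Q) / (P * Q)) := by
  have hp : (0 : ℝ) < P := by exact_mod_cast hP
  have hq : (0 : ℝ) < Q := by exact_mod_cast hQ
  rw [Nat.cast_choose ℝ (Nat.le_add_right P Q), Nat.add_sub_cancel_left, div_mul_eq_mul_div,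
    div_le_iff₀ (by positivity)]
  have hN := factorial_le_exp_one_mul_sqrt_mul_pow (n := P + Q) (by omega)
  push_cast at hN
  have hpow : ((P + Q) / exp 1) ^ (P + Q) * ((P / (P + Q)) ^ P * (Q / (P + Q)) ^ Q)
      = (P / exp 1) ^ P * (Q / exp 1) ^ Q := by
    rw [pow_add, mul_mul_mul_comm, ← mul_pow, ← mul_pow]
    congr 2 <;> field_simp
  have hsqrt : √((P + Q) / (P * Q) : ℝ) * (√(2 * π * P) * √(2 * π * Q))
      = 2 * π * √(P + Q : ℝ) := by
    rw [← Real.sqrt_mul (by positivity), ← Real.sqrt_mul (by positivity),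
      show ((P + Q) / (P * Q) * (2 * π * P * (2 * π * Q)) : ℝ) = (2 * π) ^ 2 * (P + Q) by
        field_simp,
      Real.sqrt_mul (by positivity), Real.sqrt_sq (by positivity)]
  calc ((P + Q)! : ℝ) * ((P / (P + Q)) ^ P * (Q / (P + Q)) ^ Q)
      ≤ exp 1 * √(P + Q : ℝ) * ((P + Q) / exp 1) ^ (P + Q)
          * ((P / (P + Q)) ^ P * (Q / (P + Q)) ^ Q) := by gcongr
    _ = exp 1 / (2 * π) * (√((P + Q) / (P * Q)) * (√(2 * π * P) * √(2 * π * Q)))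
          * ((P / exp 1) ^ P * (Q / exp 1) ^ Q) := by
      rw [mul_assoc, hpow, hsqrt]
      field_simp
    _ = exp 1 / (2 * π) * √((P + Q) / (P * Q))
          * ((√(2 * π * P) * (P / exp 1) ^ P) * (√(2 * π * Q) * (Q / exp 1) ^ Q)) := by ring
    _ ≤ exp 1 / (2 * π) * √((P + Q) / (P * Q)) * (P ! * Q !) := by
      gcongr <;> exact Stirling.le_factorial_stirling _

theorem pow_mul_one_sub_pow_le_mul_exp (P Q : ℕ) (hP : 0 < P) (hQ : 0 < Q) {x : ℝ}
    (hx : x ∈ Icc 0 1) (hxm : |x - P / (P + Q)| ≤ min (P / (P + Q) : ℝ) (Q / (P + Q))) :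
    x ^ P * (1 - x) ^ Q ≤ (P / (P + Q)) ^ P * (Q / (P + Q)) ^ Q
      * exp (-(((P + Q) ^ 2 / (6 * P) + (P + Q) ^ 2 / (6 * Q)) * (x - P / (P + Q)) ^ 2)) := by
  have hp : (0 : ℝ) < P := by exact_mod_cast hP
  have hq : (0 : ℝ) < Q := by exact_mod_cast hQ
  rcases hx.1.eq_or_lt with rfl | hx0
  · rw [zero_pow hP.ne', zero_mul]; positivity
  rcases hx.2.eq_or_lt with rfl | hx1
  · rw [sub_self, zero_pow hQ.ne', mul_zero]; positivity
  set s : ℝ := (P + Q) * (x - P / (P + Q)) with hs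
  have hs' : s = (P + Q) * x - P := by rw [hs]; field_simp
  have hx_eq : x = P / (P + Q) * (1 + s / P) := by rw [hs']; field_simp; ring
  have h1x_eq : 1 - x = Q / (P + Q) * (1 - s / Q) := by rw [hs']; field_simp; ring
  have hs_abs : |s| ≤ min (P : ℝ) Q := by
    rw [min_div_div_right (by positivity)] at hxm
    rwa [hs, abs_mul, abs_of_pos (by positivity), ← le_div_iff₀' (by positivity)]
  have hsP : -P < s := by nlinarith
  have hsQ : s < Q := by nlinarith
  have hpos_P : 0 < 1 + s / P := by rw [← neg_lt_iff_pos_add', lt_div_iff₀ hp]; linarith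
  have hpos_Q : 0 < 1 - s / Q := by rw [sub_pos, div_lt_one hq]; exact hsQ
  calc x ^ P * (1 - x) ^ Q
      = (P / (P + Q) * (1 + s / P)) ^ P * (Q / (P + Q) * (1 - s / Q)) ^ Q := by
        rw [← hx_eq, ← h1x_eq]
    _ = (P / (P + Q)) ^ P * (Q / (P + Q)) ^ Q
          * exp (P * log (1 + s / P) + Q * log (1 - s / Q)) := by
        rw [← Real.log_pow, ← Real.log_pow, exp_add, exp_log (pow_pos hpos_P P),
          exp_log (pow_pos hpos_Q Q), mul_pow, mul_pow]
        ring
    _ ≤ (P / (P + Q)) ^ P * (Q / (P + Q)) ^ Q * exp (-(s ^ 2 / (6 * P) + s ^ 2 / (6 * Q))) := by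
        gcongr
        exact mul_log_one_add_add_mul_log_one_sub_le hp hq hsP hsQ hs_abs
    _ = _ := by rw [hs]; ring_nf

theorem orderStatDensity_add_one (P Q : ℕ) (x : ℝ) :
    orderStatDensity (P + Q + 1) (P + 1) x
      = (P + Q + 1) * (P + Q).choose P * (x ^ P * (1 - x) ^ Q) := by
  rw [orderStatDensity, Nat.cast_choose ℝ (Nat.le_add_right P Q), Nat.add_sub_cancel_left,
    Nat.add_sub_cancel, show P + Q + 1 - (P + 1) = Q by omega, Nat.factorial_succ]
  push_cast
  ring

theorem orderStatDensity_le_mul_exp (P Q : ℕ) (hP : 0 < P) (hQ : 0 < Q) {x : ℝ}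
    (hx : x ∈ Icc 0 1) (hxm : |x - P / (P + Q)| ≤ min (P / (P + Q) : ℝ) (Q / (P + Q))) :
    orderStatDensity (P + Q + 1) (P + 1) x
      ≤ 20 / π * (P + Q + 1) * √((P + Q + 1) / (P * Q))
        * exp (-(((P + Q) ^ 2 / (6 * P) + (P + Q) ^ 2 / (6 * Q)) * (x - P / (P + Q)) ^ 2)) := by
  have hp : (0 : ℝ) < P := by exact_mod_cast hP
  have hq : (0 : ℝ) < Q := by exact_mod_cast hQ
  have hconst : exp 1 / (2 * π) ≤ 20 / π := by
    rw [div_le_div_iff₀ (by positivity) pi_pos]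
    nlinarith [exp_one_lt_d9, pi_pos]
  rw [orderStatDensity_add_one]
  calc ((P + Q + 1) * (P + Q).choose P * (x ^ P * (1 - x) ^ Q) : ℝ)
      ≤ (P + Q + 1) * (P + Q).choose P * ((P / (P + Q)) ^ P * (Q / (P + Q)) ^ Q
          * exp (-(((P + Q) ^ 2 / (6 * P) + (P + Q) ^ 2 / (6 * Q)) * (x - P / (P + Q)) ^ 2))) := by
        gcongr _ * ?_
        exact pow_mul_one_sub_pow_le_mul_exp P Q hP hQ hx hxm
    _ = (P + Q + 1) * ((P + Q).choose P * ((P / (P + Q)) ^ P * (Q / (P + Q)) ^ Q))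
          * exp (-(((P + Q) ^ 2 / (6 * P) + (P + Q) ^ 2 / (6 * Q)) * (x - P / (P + Q)) ^ 2)) := by
        ring
    _ ≤ (P + Q + 1) * (exp 1 / (2 * π) * √((P + Q) / (P * Q)))
          * exp (-(((P + Q) ^ 2 / (6 * P) + (P + Q) ^ 2 / (6 * Q)) * (x - P / (P + Q)) ^ 2)) := by
        gcongr _ * ?_ * _
        exact choose_mul_pow_mul_pow_le P Q hP hQ
    _ ≤ (P + Q + 1) * (20 / π * √((P + Q + 1) / (P * Q)))
          * exp (-(((P + Q) ^ 2 / (6 * P) + (P + Q) ^ 2 / (6 * Q)) * (x - P / (P + Q)) ^ 2)) := by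
        gcongr _ * (?_ * √(?_ / _)) * _
        linarith
    _ = _ := by ring

theorem hasDerivAt_pow_mul_one_sub_pow (P Q : ℕ) (hP : 0 < P) (hQ : 0 < Q) (x : ℝ) :
    HasDerivAt (fun y : ℝ ↦ y ^ P * (1 - y) ^ Q)
      (x ^ (P - 1) * (1 - x) ^ (Q - 1) * (P - (P + Q) * x)) x := by
  have h := (hasDerivAt_pow P x).mul ((hasDerivAt_pow Q (1 - x)).comp x
    ((hasDerivAt_id x).const_sub 1))
  refine h.congr_deriv ?_
  obtain ⟨P, rfl⟩ := Nat.exists_eq_add_one_of_ne_zero hP.ne'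
  obtain ⟨Q, rfl⟩ := Nat.exists_eq_add_one_of_ne_zero hQ.ne'
  simp only [Nat.add_sub_cancel, Function.comp_apply, pow_succ]
  push_cast
  ring

theorem monotoneOn_pow_mul_one_sub_pow (P Q : ℕ) (hP : 0 < P) (hQ : 0 < Q) :
    MonotoneOn (fun x : ℝ ↦ x ^ P * (1 - x) ^ Q) (Icc 0 (P / (P + Q))) := by
  have hPQ : (0 : ℝ) < P + Q := by positivity
  refine monotoneOn_of_hasDerivWithinAt_nonneg (convex_Icc _ _) (by fun_prop)
    (fun x _ ↦ (hasDerivAt_pow_mul_one_sub_pow P Q hP hQ x).hasDerivWithinAt) fun x hx ↦ ?_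
  rw [interior_Icc, mem_Ioo, lt_div_iff₀ hPQ] at hx
  have : x < 1 := by nlinarith [(Nat.cast_pos (α := ℝ)).2 hQ]
  have : 0 ≤ (P : ℝ) - (P + Q) * x := by linarith
  exact mul_nonneg (mul_nonneg (pow_nonneg hx.1.le _) (pow_nonneg (by linarith) _)) this

theorem antitoneOn_pow_mul_one_sub_pow (P Q : ℕ) (hP : 0 < P) (hQ : 0 < Q) :
    AntitoneOn (fun x : ℝ ↦ x ^ P * (1 - x) ^ Q) (Icc (P / (P + Q)) 1) := by
  have hPQ : (0 : ℝ) < P + Q := by positivity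
  refine antitoneOn_of_hasDerivWithinAt_nonpos (convex_Icc _ _) (by fun_prop)
    (fun x _ ↦ (hasDerivAt_pow_mul_one_sub_pow P Q hP hQ x).hasDerivWithinAt) fun x hx ↦ ?_
  rw [interior_Icc, mem_Ioo, div_lt_iff₀ hPQ] at hx
  have : 0 < x := by nlinarith [(Nat.cast_pos (α := ℝ)).2 hP]
  have : 0 ≤ 1 - x := by linarith
  have : (P : ℝ) - (P + Q) * x ≤ 0 := by linarith
  exact mul_nonpos_of_nonneg_of_nonpos
    (mul_nonneg (pow_nonneg (by linarith) _) (pow_nonneg (by linarith) _)) this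

theorem exists_abs_sub_eq_and_pow_mul_one_sub_pow_le (P Q : ℕ) (hP : 0 < P) (hQ : 0 < Q)
    {c x : ℝ} (hc : 0 ≤ c) (hcP : c ≤ P / (P + Q)) (hcQ : c ≤ Q / (P + Q))
    (hx : x ∈ Icc 0 1) (hcx : c ≤ |x - P / (P + Q)|) :
    ∃ y ∈ Icc (0 : ℝ) 1, |y - P / (P + Q)| = c ∧ x ^ P * (1 - x) ^ Q ≤ y ^ P * (1 - y) ^ Q := by
  have hm : (P / (P + Q) : ℝ) + Q / (P + Q) = 1 := by rw [← add_div, div_self (by positivity)]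
  rcases le_total x (P / (P + Q)) with hxm | hxm
  · rw [abs_of_nonpos (sub_nonpos.2 hxm)] at hcx
    refine ⟨P / (P + Q) - c, ⟨by linarith, by linarith⟩, by simp [abs_of_nonneg hc], ?_⟩
    exact monotoneOn_pow_mul_one_sub_pow P Q hP hQ ⟨hx.1, hxm⟩ ⟨by linarith, by linarith⟩
      (by linarith)
  · rw [abs_of_nonneg (sub_nonneg.2 hxm)] at hcx
    refine ⟨P / (P + Q) + c, ⟨by positivity, by linarith⟩, by simp [abs_of_nonneg hc], ?_⟩
    exact antitoneOn_pow_mul_one_sub_pow P Q hP hQ ⟨by linarith, by linarith⟩ ⟨hxm, hx.2⟩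
      (by linarith)

/-- Explicit Gaussian-type pointwise bounds for the density of the
`k`-th order statistic of `n` i.i.d. uniform `[0,1]` random variables, `2 ≤ k ≤ n−1`. -/
theorem stmt19 (n k : ℕ) (hk : 2 ≤ k) (hkn : k + 1 ≤ n)
    (m A : ℝ)
    (hm : m = ((k : ℝ) - 1) / ((n : ℝ) - 1))
    (hA : A = ((n : ℝ) - 1) ^ 2 / (6 * ((k : ℝ) - 1))
            + ((n : ℝ) - 1) ^ 2 / (6 * ((n : ℝ) - (k : ℝ)))) :
    (∀ x ∈ Set.Icc (0 : ℝ) 1,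
      |x - m| ≤ (1 - (2 : ℝ) ^ (-(1 / 3 : ℝ))) *
          min (((k : ℝ) - 1) / ((n : ℝ) - 1)) (((n : ℝ) - (k : ℝ)) / ((n : ℝ) - 1)) →
        orderStatDensity n k x ≤
          20 / Real.pi * (n : ℝ)
            * Real.sqrt ((n : ℝ) / (((k : ℝ) - 1) * ((n : ℝ) - (k : ℝ))))
            * Real.exp (-(A * (x - m) ^ 2)))
    ∧
    (∀ c : ℝ, 0 ≤ c →
      c ≤ (1 - (2 : ℝ) ^ (-(1 / 3 : ℝ))) *
          min (((k : ℝ) - 1) / ((n : ℝ) - 1)) (((n : ℝ) - (k : ℝ)) / ((n : ℝ) - 1)) →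
      ∀ x ∈ Set.Icc (0 : ℝ) 1, c ≤ |x - m| →
        orderStatDensity n k x ≤
          20 / Real.pi * (n : ℝ)
            * Real.sqrt ((n : ℝ) / (((k : ℝ) - 1) * ((n : ℝ) - (k : ℝ))))
            * Real.exp (-(A * c ^ 2))) := by
  obtain ⟨P, rfl⟩ : ∃ P, k = P + 1 := ⟨k - 1, by omega⟩
  obtain ⟨Q, rfl⟩ : ∃ Q, n = P + Q + 1 := ⟨n - P - 1, by omega⟩
  have hP : 0 < P := by omega
  have hQ : 0 < Q := by omega
  have hk1 : ((P + 1 : ℕ) : ℝ) - 1 = P := by push_cast; ring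
  have hn1 : ((P + Q + 1 : ℕ) : ℝ) - 1 = P + Q := by push_cast; ring
  have hnk : ((P + Q + 1 : ℕ) : ℝ) - ((P + 1 : ℕ) : ℝ) = Q := by push_cast; ring
  subst hm hA
  simp only [hk1, hn1, hnk]
  push_cast
  have hshrink : ∀ {t : ℝ}, t ≤ (1 - 2 ^ (-(1 / 3 : ℝ))) * min (P / (P + Q) : ℝ) (Q / (P + Q)) →
      t ≤ min (P / (P + Q) : ℝ) (Q / (P + Q)) :=
    fun ht ↦ ht.trans (mul_le_of_le_one_left (by positivity)
      (sub_le_self _ (rpow_nonneg zero_le_two _)))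
  refine ⟨fun x hx hxm ↦ orderStatDensity_le_mul_exp P Q hP hQ hx (hshrink hxm),
    fun c hc hcδ x hx hcx ↦ ?_⟩
  have hcm := hshrink hcδ
  obtain ⟨y, hy, hyc, hxy⟩ := exists_abs_sub_eq_and_pow_mul_one_sub_pow_le P Q hP hQ hc
    (le_min_iff.1 hcm).1 (le_min_iff.1 hcm).2 hx hcx
  calc orderStatDensity (P + Q + 1) (P + 1) x
      ≤ orderStatDensity (P + Q + 1) (P + 1) y := by
        simp only [orderStatDensity_add_one]
        gcongr
    _ ≤ _ := orderStatDensity_le_mul_exp P Q hP hQ hy (hyc ▸ hcm)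
    _ = _ := by rw [← hyc, sq_abs (y - _)]
end
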